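/- Let H be a closed affine half-space of ℝ^N with reflection σ_H and let Ω be measurable with σ_H(Ω) = Ω. For any measurable u, v : Ω → ℝ and any exponent m ∈ [1, ∞), the polarization is contractive in L^m: ‖u^H − v^H‖_{L^m(Ω)} ≤ ‖u − v‖_{L^m(Ω)}. -/

import Mathlib

/-!
Polarization acts on the pairs `(w x, w (σ x))` only: on each pair it either does nothing (when
`σ x = x`) or sorts it into `(max, min)` or `(min, max)`. For a convex `f` on `ℝ`, sorting two pairs
the same way does not increase `f (a - a') + f (b - b')`: the sorted differences lie between the
unsorted ones and have the same sum. Integrating this over `Ω`, which the measure-preserving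
involution `σ` maps onto itself, counts every pair twice; take `f = |·| ^ m`.
-/

open MeasureTheory ENNReal

open Classical in
noncomputable def polarization {N : ℕ} (H : Set (EuclideanSpace ℝ (Fin N)))
    (σ : EuclideanSpace ℝ (Fin N) → EuclideanSpace ℝ (Fin N))
    (u : EuclideanSpace ℝ (Fin N) → ℝ) : EuclideanSpace ℝ (Fin N) → ℝ :=
  fun x => if x ∈ H then max (u x) (u (σ x)) else min (u x) (u (σ x))

open Set Function

theorem convexOn_abs_rpow {m : ℝ} (hm : 1 ≤ m) : ConvexOn ℝ univ fun t : ℝ => |t| ^ m := by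
  refine ⟨convex_univ, fun x _ y _ a b ha hb hab => ?_⟩
  have h_abs : |a • x + b • y| ≤ a • |x| + b • |y| := by
    simpa only [smul_eq_mul, abs_mul, abs_of_nonneg ha, abs_of_nonneg hb] using abs_add_le (a • x) (b • y)
  calc |a • x + b • y| ^ m
      ≤ (a • |x| + b • |y|) ^ m := Real.rpow_le_rpow (abs_nonneg _) h_abs (by linarith)
    _ ≤ a • |x| ^ m + b • |y| ^ m :=
        (convexOn_rpow hm).2 (abs_nonneg x) (abs_nonneg y) ha hb hab

namespace ConvexOn

variable {f : ℝ → ℝ}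

theorem map_add_map_sub_le_of_mem_Icc (hf : ConvexOn ℝ univ f) {p q x : ℝ} (hx : x ∈ Icc p q) :
    f x + f (p + q - x) ≤ f p + f q := by
  have hg : ConvexOn ℝ univ fun t => f t + f (p + q - t) :=
    hf.add (hf.comp_affineMap (AffineMap.const ℝ ℝ (p + q) - AffineMap.id ℝ ℝ))
  have := hg.le_on_segment (mem_univ p) (mem_univ q)
    (by rwa [segment_eq_Icc (hx.1.trans hx.2)])
  simpa [add_comm (f q)] using this

theorem map_max_sub_max_add_map_min_sub_min_le (hf : ConvexOn ℝ univ f) (a b a' b' : ℝ) :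
    f (max a b - max a' b') + f (min a b - min a' b') ≤ f (a - a') + f (b - b') := by
  rcases le_total a b with hab | hab <;> rcases le_total a' b' with hab' | hab'
  · simp only [max_eq_right hab, max_eq_right hab', min_eq_left hab, min_eq_left hab', add_comm,
      le_refl]
  · simp only [max_eq_right hab, max_eq_left hab', min_eq_left hab, min_eq_right hab']
    have := hf.map_add_map_sub_le_of_mem_Icc (p := a - a') (q := b - b') (x := b - a')
      ⟨by linarith, by linarith⟩
    rwa [show a - a' + (b - b') - (b - a') = a - b' by ring] at this
  · simp only [max_eq_left hab, max_eq_right hab', min_eq_right hab, min_eq_left hab']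
    have := hf.map_add_map_sub_le_of_mem_Icc (p := b - b') (q := a - a') (x := a - b')
      ⟨by linarith, by linarith⟩
    rw [show b - b' + (a - a') - (a - b') = b - a' by ring] at this
    linarith
  · simp only [max_eq_left hab, max_eq_left hab', min_eq_right hab, min_eq_right hab', le_refl]

end ConvexOn

section Polarization

variable {N : ℕ} {H : Set (EuclideanSpace ℝ (Fin N))}
  {σ : EuclideanSpace ℝ (Fin N) → EuclideanSpace ℝ (Fin N)} {x : EuclideanSpace ℝ (Fin N)}

theorem polarization_apply_of_mem (u : EuclideanSpace ℝ (Fin N) → ℝ) (hx : x ∈ H) :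
    polarization H σ u x = max (u x) (u (σ x)) := if_pos hx

theorem polarization_apply_of_notMem (u : EuclideanSpace ℝ (Fin N) → ℝ) (hx : x ∉ H) :
    polarization H σ u x = min (u x) (u (σ x)) := if_neg hx

theorem ConvexOn.map_polarization_sub_add_map_polarization_sub_le {f : ℝ → ℝ}
    (hf : ConvexOn ℝ univ f) (hσ : Involutive σ) (hH₁ : ∀ x ∈ H, σ x ∈ H → σ x = x)
    (hH₂ : ∀ x ∉ H, σ x ∈ H) (u v : EuclideanSpace ℝ (Fin N) → ℝ) (x : EuclideanSpace ℝ (Fin N)) :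
    f (polarization H σ u x - polarization H σ v x)
        + f (polarization H σ u (σ x) - polarization H σ v (σ x))
      ≤ f (u x - v x) + f (u (σ x) - v (σ x)) := by
  by_cases hx : x ∈ H
  · by_cases hσx : σ x ∈ H
    · simp only [polarization_apply_of_mem _ hx, hH₁ x hx hσx, max_self, le_refl]
    · simp only [polarization_apply_of_mem _ hx, polarization_apply_of_notMem _ hσx, hσ x,
        min_comm (u (σ x)), min_comm (v (σ x))]
      exact hf.map_max_sub_max_add_map_min_sub_min_le _ _ _ _
  · simp only [polarization_apply_of_notMem _ hx, polarization_apply_of_mem _ (hH₂ x hx), hσ x,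
      max_comm (u (σ x)), max_comm (v (σ x))]
    rw [add_comm]
    exact hf.map_max_sub_max_add_map_min_sub_min_le _ _ _ _

end Polarization

/-- Only the integrand `G` on the larger side needs to be measurable: the lower integral is
superadditive, and the change of variables along a measurable equivalence holds for every
integrand. -/
theorem MeasureTheory.MeasurePreserving.setLIntegral_le_of_add_comp_le {α : Type*}
    [MeasurableSpace α] {μ : Measure α} {σ : α → α} (hσ : MeasurePreserving σ μ μ)
    (hσinv : Involutive σ) {s : Set α} (hs : σ ⁻¹' s = s) {F G : α → ℝ≥0∞} (hG : Measurable G)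
    (hFG : ∀ x, F x + F (σ x) ≤ G x + G (σ x)) :
    ∫⁻ x in s, F x ∂μ ≤ ∫⁻ x in s, G x ∂μ := by
  have h_comp (g : α → ℝ≥0∞) : ∫⁻ x in s, g (σ x) ∂μ = ∫⁻ x in s, g x ∂μ := by
    conv_lhs => rw [← hs]
    exact hσ.setLIntegral_comp_preimage_emb
      (MeasurableEquiv.ofInvolutive σ hσinv hσ.measurable).measurableEmbedding g s
  have h_two : 2 * ∫⁻ x in s, F x ∂μ ≤ 2 * ∫⁻ x in s, G x ∂μ := by
    calc 2 * ∫⁻ x in s, F x ∂μ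
        = (∫⁻ x in s, F x ∂μ) + ∫⁻ x in s, F (σ x) ∂μ := by rw [h_comp, two_mul]
      _ ≤ ∫⁻ x in s, (F x + F (σ x)) ∂μ := le_lintegral_add _ _
      _ ≤ ∫⁻ x in s, (G x + G (σ x)) ∂μ := lintegral_mono hFG
      _ = (∫⁻ x in s, G x ∂μ) + ∫⁻ x in s, G (σ x) ∂μ := lintegral_add_left hG _
      _ = 2 * ∫⁻ x in s, G x ∂μ := by rw [h_comp, two_mul]
  exact (ENNReal.mul_le_mul_iff_right two_ne_zero ofNat_ne_top).mp h_two

theorem polarization_contractive_Lm_general {N : ℕ}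
    (H : Set (EuclideanSpace ℝ (Fin N)))
    (σ : EuclideanSpace ℝ (Fin N) → EuclideanSpace ℝ (Fin N))
    (hσinv : Function.Involutive σ)
    (hσmp : MeasurePreserving σ volume volume)
    (hH1 : ∀ x ∈ H, σ x ∈ H → σ x = x)
    (hH2 : ∀ x ∉ H, σ x ∈ H)
    (Ω : Set (EuclideanSpace ℝ (Fin N)))
    (hΩσ : σ '' Ω = Ω)
    (u v : EuclideanSpace ℝ (Fin N) → ℝ) (hu : Measurable u) (hv : Measurable v)
    (m : ℝ) (hm : 1 ≤ m) :
    ∫⁻ x in Ω, ENNReal.ofReal (|polarization H σ u x - polarization H σ v x| ^ m)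
      ≤ ∫⁻ x in Ω, ENNReal.ofReal (|u x - v x| ^ m) := by
  have hΩ : σ ⁻¹' Ω = Ω := by rwa [← hσinv.image_eq_preimage_symm]
  refine hσmp.setLIntegral_le_of_add_comp_le hσinv hΩ
    (((hu.sub hv).abs.pow_const m).ennreal_ofReal) fun x => ?_
  have hnonneg (t : ℝ) : 0 ≤ |t| ^ m := Real.rpow_nonneg (abs_nonneg t) m
  rw [← ofReal_add (hnonneg _) (hnonneg _), ← ofReal_add (hnonneg _) (hnonneg _)]
  exact ofReal_le_ofReal <|
    (convexOn_abs_rpow hm).map_polarization_sub_add_map_polarization_sub_le hσinv hH1 hH2 u v x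

/-- Polarization is contractive in `L^m(Ω)` for every `1 ≤ m < ∞`. -/
theorem polarization_contractive_Lm {N : ℕ}
    (H : Set (EuclideanSpace ℝ (Fin N))) (hHcl : IsClosed H)
    (σ : EuclideanSpace ℝ (Fin N) → EuclideanSpace ℝ (Fin N))
    (hσiso : Isometry σ) (hσinv : Function.Involutive σ)
    (hσmp : MeasurePreserving σ volume volume)
    (hH1 : ∀ x ∈ H, σ x ∈ H → σ x = x)
    (hH2 : ∀ x ∉ H, σ x ∈ H)
    (Ω : Set (EuclideanSpace ℝ (Fin N))) (hΩ : MeasurableSet Ω)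
    (hΩσ : σ '' Ω = Ω)
    (u v : EuclideanSpace ℝ (Fin N) → ℝ) (hu : Measurable u) (hv : Measurable v)
    (m : ℝ) (hm : 1 ≤ m) :
    ∫⁻ x in Ω, ENNReal.ofReal (|polarization H σ u x - polarization H σ v x| ^ m)
      ≤ ∫⁻ x in Ω, ENNReal.ofReal (|u x - v x| ^ m) :=
  polarization_contractive_Lm_general H σ hσinv hσmp hH1 hH2 Ω hΩσ u v hu hv m hm
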